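/- Let n ≥ 2 and let M_n ∈ ℝ^{n×n} be the tridiagonal matrix with (M_n)_{k,k+1} = 1/2 for 1 ≤ k ≤ n−1, (M_n)_{k+1,k} = −1/2 for 1 ≤ k ≤ n−2, (M_n)_{n,n−1} = −1, (M_n)_{n,n} = 1, and all other entries (including all other diagonal entries) equal to 0. Then every eigenvalue μ ∈ ℂ of M_n satisfies |μ| < 1 + 1/√(2n). -/

import Mathlib

/-- The tridiagonal time-discretization matrix `M_n = τB` (0-based indexing):
superdiagonal entries `1/2`, subdiagonal entries `-1/2` except the last one which is `-1`,
and all diagonal entries `0` except the last one which is `1`. -/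
noncomputable def Mmat (n : ℕ) : Matrix (Fin n) (Fin n) ℝ := fun i j =>
  if (j : ℕ) = (i : ℕ) + 1 then 1/2
  else if (i : ℕ) = (j : ℕ) + 1 then (if (i : ℕ) = n - 1 then -1 else -1/2)
  else if (i : ℕ) = n - 1 ∧ (j : ℕ) = n - 1 then 1
  else 0

/-!
An eigenvector `v` of `M_n` satisfies `v₁ = 2μ v₀` and `v_{k+1} = 2μ v_k + v_{k-1}`, so
`v_k = v₀ F_{k+1}(2μ)` for the Fibonacci polynomials `F`, and the last row becomes
`(1 - μ) F_n(2μ) = F_{n-1}(2μ)`. With `w² = μ² + 1`, Binet's formula for the roots `μ ± w`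
(whose product is `-1`) turns this into `(1 - w)(μ + w)ⁿ = (1 + w)(μ - w)ⁿ`; taking norms gives
`|1 + w| = |μ| |μ + w|ⁿ`, and likewise with `w` replaced by `-w`.
If `|μ| ≥ 1 + 1/√(2n)`, the larger root modulus `Z` satisfies `Z + 1/Z ≥ 2|μ|`, hence
`(Z - 1)² ≥ 2/√(2n)` and `Zⁿ ≥ 1 + n(Z - 1) ≥ 3`, while `|1 + w| ≤ 2 + |μ| < 3|μ|`.
-/

open Matrix

theorem Matrix.exists_mulVec_eq_smul_of_mem_spectrum {ι K : Type*} [Fintype ι] [DecidableEq ι]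
    [Field K] {A : Matrix ι ι K} {μ : K} (h : μ ∈ spectrum K A) : ∃ v ≠ 0, A *ᵥ v = μ • v := by
  rw [← Matrix.spectrum_toLin', ← Module.End.hasEigenvalue_iff_mem_spectrum] at h
  obtain ⟨v, hv⟩ := h.exists_hasEigenvector
  exact ⟨v, hv.2, hv.apply_eq_smul⟩

section Rows

variable {n : ℕ}

lemma Mmat_apply_eq_zero {i j : Fin n} (h₁ : (j : ℕ) ≠ i + 1) (h₂ : (i : ℕ) ≠ j + 1)
    (h₃ : (i : ℕ) ≠ j ∨ (i : ℕ) + 1 ≠ n) : Mmat n i j = 0 := by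
  unfold Mmat; split_ifs <;> first | rfl | omega

variable (v : Fin n → ℂ)

lemma Mmat_mulVec_first {i j : Fin n} (hi : (i : ℕ) = 0) (hj : (j : ℕ) = 1) :
    ((Mmat n).map Complex.ofReal *ᵥ v) i = v j / 2 := by
  have hij : Mmat n i j = 1 / 2 := by rw [Mmat, if_pos (by omega)]
  rw [mulVec, dotProduct, Fintype.sum_eq_single j]
  · rw [map_apply, hij]; push_cast; ring
  · intro l hl
    have hl' : (l : ℕ) ≠ 1 := fun h => hl (Fin.ext (by omega))
    simp [Mmat_apply_eq_zero (i := i) (j := l) (by omega) (by omega) (by omega)]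

lemma Mmat_mulVec_interior {i j k : Fin n} (hj : (j : ℕ) = i + 1) (hk : (i : ℕ) = k + 1) :
    ((Mmat n).map Complex.ofReal *ᵥ v) i = (v j - v k) / 2 := by
  have hij : Mmat n i j = 1 / 2 := by rw [Mmat, if_pos hj]
  have hik : Mmat n i k = -1 / 2 := by rw [Mmat, if_neg (by omega), if_pos hk, if_neg (by omega)]
  rw [mulVec, dotProduct, Fintype.sum_eq_add j k (fun h => by omega)]
  · rw [map_apply, map_apply, hij, hik]; push_cast; ring
  · rintro l ⟨hlj, hlk⟩
    have hlj' : (l : ℕ) ≠ j := fun h => hlj (Fin.ext h)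
    have hlk' : (l : ℕ) ≠ k := fun h => hlk (Fin.ext h)
    simp [Mmat_apply_eq_zero (i := i) (j := l) (by omega) (by omega) (by omega)]

lemma Mmat_mulVec_last {i j : Fin n} (hi : (i : ℕ) + 1 = n) (hj : (i : ℕ) = j + 1) :
    ((Mmat n).map Complex.ofReal *ᵥ v) i = v i - v j := by
  have hii : Mmat n i i = 1 := by
    rw [Mmat, if_neg (by omega), if_neg (by omega), if_pos (by omega)]
  have hij : Mmat n i j = -1 := by rw [Mmat, if_neg (by omega), if_pos hj, if_pos (by omega)]
  rw [mulVec, dotProduct, Fintype.sum_eq_add i j (fun h => by omega)]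
  · rw [map_apply, map_apply, hii, hij]; push_cast; ring
  · rintro l ⟨hli, hlj⟩
    have hli' : (l : ℕ) ≠ i := fun h => hli (Fin.ext h)
    have hlj' : (l : ℕ) ≠ j := fun h => hlj (Fin.ext h)
    simp [Mmat_apply_eq_zero (i := i) (j := l) (by omega) (by omega) (by omega)]

end Rows

section FibSeq

variable {R : Type*} [CommRing R]

/-- The index is shifted: `fibSeq a k` is the Fibonacci polynomial `F_{k+1}` at `a`. -/
def fibSeq (a : R) : ℕ → R
  | 0 => 1
  | 1 => a
  | k + 2 => a * fibSeq a (k + 1) + fibSeq a k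

lemma eq_mul_fibSeq {a : R} {V : ℕ → R} {N : ℕ} (h₁ : V 1 = a * V 0)
    (hrec : ∀ k, k + 2 ≤ N → V (k + 2) = a * V (k + 1) + V k) :
    ∀ k ≤ N, V k = V 0 * fibSeq a k := by
  intro k
  induction k using Nat.twoStepInduction with
  | zero => simp [fibSeq]
  | one => intro _; rw [h₁, fibSeq, mul_comm]
  | more k ih₀ ih₁ =>
    intro hk
    rw [hrec k hk, ih₀ (by omega), ih₁ (by omega), fibSeq]
    ring

lemma sub_mul_fibSeq {z₁ z₂ : R} (h : z₁ * z₂ = -1) (k : ℕ) :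
    (z₁ - z₂) * fibSeq (z₁ + z₂) k = z₁ ^ (k + 1) - z₂ ^ (k + 1) := by
  induction k using Nat.twoStepInduction with
  | zero => simp [fibSeq]
  | one => rw [fibSeq]; ring
  | more k ih₀ ih₁ =>
    rw [fibSeq]
    linear_combination (z₁ + z₂) * ih₁ + ih₀ + (z₁ ^ (k + 1) - z₂ ^ (k + 1)) * h

lemma char_eq_of_fibSeq {μ w : R} (hw : w ^ 2 = μ ^ 2 + 1) {m : ℕ}
    (h : (1 - μ) * fibSeq (2 * μ) (m + 1) = fibSeq (2 * μ) m) :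
    (1 - w) * (μ + w) ^ (m + 2) = (1 + w) * (μ - w) ^ (m + 2) := by
  have hprod : (μ + w) * (μ - w) = -1 := by linear_combination -hw
  have hsum : (μ + w) + (μ - w) = 2 * μ := by ring
  have binet := sub_mul_fibSeq hprod
  rw [hsum] at binet
  linear_combination (μ + w - (μ - w)) * h - (1 - μ) * binet (m + 1) + binet m
    - ((μ + w) ^ (m + 1) - (μ - w) ^ (m + 1)) * hw

end FibSeq

open Fin.NatCast in
lemma fibSeq_eq_of_mem_spectrum_Mmat {m : ℕ} {μ : ℂ}
    (hμ : μ ∈ spectrum ℂ ((Mmat (m + 2)).map Complex.ofReal)) :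
    (1 - μ) * fibSeq (2 * μ) (m + 1) = fibSeq (2 * μ) m := by
  obtain ⟨v, hv0, hv⟩ := Matrix.exists_mulVec_eq_smul_of_mem_spectrum hμ
  have row (i) : ((Mmat (m + 2)).map Complex.ofReal *ᵥ v) i = μ * v i := by
    rw [hv, Pi.smul_apply, smul_eq_mul]
  have val {k : ℕ} (hk : k < m + 2) : ((k : Fin (m + 2)) : ℕ) = k := Fin.val_cast_of_lt hk
  have hfirst : v (1 : ℕ) = 2 * μ * v (0 : ℕ) := by
    have := Mmat_mulVec_first v (val (k := 0) (by omega)) (val (k := 1) (by omega))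
    rw [row] at this
    linear_combination -2 * this
  have hrec (k : ℕ) (hk : k + 2 ≤ m + 1) :
      v (k + 2 : ℕ) = 2 * μ * v (k + 1 : ℕ) + v (k : ℕ) := by
    have := Mmat_mulVec_interior v (i := (k + 1 : ℕ)) (j := (k + 2 : ℕ)) (k := (k : ℕ))
      (by rw [val (by omega), val (by omega)]) (by rw [val (by omega), val (by omega)])
    rw [row] at this
    linear_combination -2 * this
  have hlast : (1 - μ) * v (m + 1 : ℕ) = v (m : ℕ) := by
    have := Mmat_mulVec_last v (i := (m + 1 : ℕ)) (j := (m : ℕ))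
      (by rw [val (by omega)]) (by rw [val (by omega), val (by omega)])
    rw [row] at this
    linear_combination -this
  have hV := eq_mul_fibSeq (V := fun k : ℕ => v k) hfirst hrec
  have hv00 : v (0 : ℕ) ≠ 0 := by
    refine fun h => hv0 (funext fun i => ?_)
    have hvi := hV i (by omega)
    rw [h, zero_mul] at hvi
    simpa using hvi
  rw [hV (m + 1) le_rfl, hV m (by omega)] at hlast
  exact mul_left_cancel₀ hv00 (by linear_combination hlast)

lemma three_le_pow_of_two_mul_le_add_inv {n : ℕ} (hn : 2 ≤ n) {Z : ℝ} (hZ : 1 ≤ Z)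
    (h : 2 * (1 + 1 / √(2 * n)) ≤ Z + Z⁻¹) : 3 ≤ Z ^ n := by
  have hn' : (2 : ℝ) ≤ n := by exact_mod_cast hn
  have hsqrt_le : √(2 * n) ≤ n := Real.sqrt_le_iff.2 ⟨by positivity, by nlinarith⟩
  have hx : 2 / √(2 * n) ≤ (Z - 1) ^ 2 :=
    calc 2 / √(2 * n) ≤ Z * (2 / √(2 * n)) := le_mul_of_one_le_left (by positivity) hZ
      _ = Z * (2 * (1 + 1 / √(2 * n))) - 2 * Z := by ring
      _ ≤ Z * (Z + Z⁻¹) - 2 * Z := by gcongr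
      _ = (Z - 1) ^ 2 := by field_simp; ring
  have hnx : 2 ≤ n * (Z - 1) := by
    have h4 : 4 ≤ (n * (Z - 1)) ^ 2 := by
      calc (4 : ℝ) ≤ 2 * n := by linarith
        _ = n ^ 2 * (2 / n) := by field_simp
        _ ≤ n ^ 2 * (2 / √(2 * n)) := by gcongr
        _ ≤ n ^ 2 * (Z - 1) ^ 2 := by gcongr
        _ = (n * (Z - 1)) ^ 2 := by ring
    nlinarith [mul_nonneg (by linarith : (0 : ℝ) ≤ n) (by linarith : 0 ≤ Z - 1)]
  calc (3 : ℝ) ≤ 1 + n * (Z - 1) := by linarith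
    _ ≤ (1 + (Z - 1)) ^ n := one_add_mul_le_pow (by linarith) n
    _ = Z ^ n := by ring

section CharEq

variable {μ w : ℂ}

lemma norm_add_mul_norm_sub_eq_one (hw : w ^ 2 = μ ^ 2 + 1) : ‖μ + w‖ * ‖μ - w‖ = 1 := by
  rw [← norm_mul, show (μ + w) * (μ - w) = -1 by linear_combination -hw, norm_neg, norm_one]

lemma norm_one_add_le (hw : w ^ 2 = μ ^ 2 + 1) : ‖1 + w‖ ≤ 2 + ‖μ‖ := by
  have hsq : ‖w‖ ^ 2 ≤ (1 + ‖μ‖) ^ 2 := by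
    calc ‖w‖ ^ 2 = ‖μ ^ 2 + 1‖ := by rw [← norm_pow, hw]
      _ ≤ ‖μ‖ ^ 2 + 1 := (norm_add_le _ _).trans_eq (by rw [norm_pow, norm_one])
      _ ≤ (1 + ‖μ‖) ^ 2 := by nlinarith [norm_nonneg μ]
  have hw_le := (pow_le_pow_iff_left₀ (norm_nonneg w) (by positivity) two_ne_zero).1 hsq
  calc ‖1 + w‖ ≤ ‖(1 : ℂ)‖ + ‖w‖ := norm_add_le _ _
    _ ≤ 2 + ‖μ‖ := by rw [norm_one]; linarith

lemma norm_one_add_eq {n : ℕ} (hw : w ^ 2 = μ ^ 2 + 1)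
    (h : (1 - w) * (μ + w) ^ n = (1 + w) * (μ - w) ^ n) :
    ‖1 + w‖ = ‖μ‖ * ‖μ + w‖ ^ n := by
  have hab : ‖1 - w‖ * ‖1 + w‖ = ‖μ‖ ^ 2 := by
    rw [← norm_mul, ← norm_pow, show (1 - w) * (1 + w) = -μ ^ 2 by linear_combination -hw,
      norm_neg]
  have hnorm := congrArg norm h
  rw [norm_mul, norm_mul, norm_pow, norm_pow] at hnorm
  have hsq : (‖μ‖ * ‖μ + w‖ ^ n) ^ 2 = ‖1 + w‖ ^ 2 := by
    calc (‖μ‖ * ‖μ + w‖ ^ n) ^ 2 = ‖1 + w‖ * (‖1 - w‖ * ‖μ + w‖ ^ n) * ‖μ + w‖ ^ n := by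
          rw [mul_pow, ← hab]; ring
      _ = ‖1 + w‖ ^ 2 * (‖μ + w‖ * ‖μ - w‖) ^ n := by rw [hnorm]; ring
      _ = ‖1 + w‖ ^ 2 := by rw [norm_add_mul_norm_sub_eq_one hw, one_pow, mul_one]
  exact ((pow_left_inj₀ (by positivity) (norm_nonneg _) two_ne_zero).1 hsq).symm

lemma norm_lt_of_char_eq {n : ℕ} (hn : 2 ≤ n) (hw : w ^ 2 = μ ^ 2 + 1)
    (h : (1 - w) * (μ + w) ^ n = (1 + w) * (μ - w) ^ n) :
    ‖μ‖ < 1 + 1 / √(2 * n) := by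
  wlog hle : ‖μ - w‖ ≤ ‖μ + w‖ generalizing w
  · refine this (w := -w) (by rw [neg_sq, hw]) ?_ ?_
    · simpa only [sub_neg_eq_add, ← sub_eq_add_neg] using h.symm
    · simpa only [sub_neg_eq_add, ← sub_eq_add_neg] using (not_le.1 hle).le
  by_contra! hge
  set Z := ‖μ + w‖
  have hprod : Z * ‖μ - w‖ = 1 := norm_add_mul_norm_sub_eq_one hw
  have hZ : 1 ≤ Z := by nlinarith [norm_nonneg (μ - w)]
  have hsum : 2 * ‖μ‖ ≤ Z + Z⁻¹ := by
    rw [← eq_inv_of_mul_eq_one_right hprod]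
    calc 2 * ‖μ‖ = ‖(μ + w) + (μ - w)‖ := by
          rw [show (μ + w) + (μ - w) = 2 * μ by ring, norm_mul, Complex.norm_two]
      _ ≤ Z + ‖μ - w‖ := norm_add_le _ _
  have hpow : 3 ≤ Z ^ n := three_le_pow_of_two_mul_le_add_inv hn hZ (by linarith)
  have hμ : 1 < ‖μ‖ := by
    have hε : 0 < 1 / √(2 * n) := by
      have : (0 : ℝ) < n := by exact_mod_cast (by omega : 0 < n)
      positivity
    linarith
  have hbound : ‖μ‖ * Z ^ n ≤ 2 + ‖μ‖ := norm_one_add_eq hw h ▸ norm_one_add_le hw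
  nlinarith

end CharEq

theorem stmt_14 (n : ℕ) (hn : 2 ≤ n) :
    ∀ μ ∈ spectrum ℂ ((Mmat n).map Complex.ofReal),
      ‖μ‖ < 1 + 1 / Real.sqrt (2 * n) := by
  intro μ hμ
  obtain ⟨m, rfl⟩ : ∃ m, n = m + 2 := ⟨n - 2, by omega⟩
  obtain ⟨w, hw⟩ := IsAlgClosed.exists_pow_nat_eq (μ ^ 2 + 1) two_pos
  exact norm_lt_of_char_eq hn hw (char_eq_of_fibSeq hw (fibSeq_eq_of_mem_spectrum_Mmat hμ))
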